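/- arXiv:1905.10030 — 2 statements merged into one kernel-verified Lean document; each statement's English description precedes it below -/
import Mathlib

section
/- Let L : [0,∞) → (0,∞) be slowly varying at infinity and bounded on every bounded interval, let κ ≥ 1 be an integer and α > 0 with ακ < 2, and let Δ ⊂ ℝ² be a bounded measurable set of positive Lebesgue measure. Then there exist constants C > 0 and r₀ > 0 such that for all r > r₀, ∫_Δ ∫_Δ L(r ‖u − v‖)^κ ‖u − v‖^{−ακ} du dv ≤ C L(r)^κ. -/
/-!
The integrand is split at `‖u - v‖ = R/r`. Below, `L` is bounded on `[0, R]`, and the integral of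
`‖u - v‖^{-ακ}` over a disc of radius `R/r` is `≍ (R/r)^{2-ακ}`. Above, Potter's bound
`L s ≤ e^ε L r max (s/r, r/s)^ε` for `r, s ≥ R` gives `L (r ‖u - v‖)^κ ≲ L(r)^κ ‖u - v‖^{-εκ}`,
which keeps the integrand integrable near the diagonal once `ακ + εκ < 2`; the same bound with
`s = R` shows `(R/r)^{2-ακ} ≲ L(r)^κ`.

Potter's bound comes from the uniform convergence theorem for `h = log ∘ L ∘ exp`, proved by the
Csiszár–Erdős argument: along `x_n → ∞`, the shifts `w` with some later increment
`h (x_n + w) - h x_n` large form sets of measure tending to `0`; two such sets cannot cover `[0, 1]`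
even after a translation, so every increment over `[0, 1]` splits into two small ones.
-/

open MeasureTheory Filter Topology
open Set Metric Real Module

section RadialIntegral

variable {E : Type*} [NormedAddCommGroup E] [NormedSpace ℝ E] [Nontrivial E] [FiniteDimensional ℝ E]
  [MeasurableSpace E] [BorelSpace E] (μ : Measure E) [μ.IsAddHaarMeasure]

theorem lintegral_ball_norm_rpow_neg {β : ℝ} (hβ : β < finrank ℝ E) {η : ℝ} (hη : 0 < η) :
    ∫⁻ x in ball (0 : E) η, ENNReal.ofReal (‖x‖ ^ (-β)) ∂μ =
      ENNReal.ofReal (finrank ℝ E * μ.real (ball 0 1) / (finrank ℝ E - β) *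
        η ^ ((finrank ℝ E : ℝ) - β)) := by
  have hn : 1 ≤ finrank ℝ E := finrank_pos
  have hradial : EqOn (fun y : ℝ => y ^ (finrank ℝ E - 1) • y ^ (-β))
      (fun y => y ^ ((finrank ℝ E : ℝ) - 1 - β)) (Ioo 0 η) := fun y hy => by
    simp only [smul_eq_mul, ← rpow_natCast, Nat.cast_sub hn, Nat.cast_one]
    rw [← rpow_add hy.1]; ring_nf
  have hint : IntegrableOn (fun x : E => ‖x‖ ^ (-β)) (ball 0 η) μ := by
    refine (integrableOn_fun_norm_addHaar μ (f := fun y => y ^ (-β))).2 ?_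
    refine IntegrableOn.congr_fun ?_ hradial.symm measurableSet_Ioo
    exact (intervalIntegral.integrableOn_Ioo_rpow_iff hη).2 (by linarith)
  rw [← ofReal_integral_eq_lintegral_ofReal hint (ae_of_all _ fun x => by positivity)]
  congr 1
  have hball : ball (0 : E) η = (‖·‖) ⁻¹' Iio η := by ext; simp
  have hpos : (0 : ℝ) < finrank ℝ E - β := by linarith
  calc ∫ x in ball (0 : E) η, ‖x‖ ^ (-β) ∂μ
      = ∫ x, (Iio η).indicator (fun y => y ^ (-β)) ‖x‖ ∂μ := by
        rw [← integral_indicator measurableSet_ball, hball]; rfl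
    _ = finrank ℝ E * μ.real (ball 0 1) * ∫ y in Ioo 0 η, y ^ ((finrank ℝ E : ℝ) - 1 - β) := by
        rw [integral_fun_norm_addHaar μ, nsmul_eq_mul, smul_eq_mul, ← mul_assoc]
        congr 1
        have (y : ℝ) : y ^ (finrank ℝ E - 1) • (Iio η).indicator (fun y => y ^ (-β)) y =
            (Iio η).indicator (fun y => y ^ (finrank ℝ E - 1) • y ^ (-β)) y := by
          by_cases hy : y ∈ Iio η <;> simp [hy]
        simp_rw [this]
        rw [setIntegral_indicator measurableSet_Iio, Ioi_inter_Iio]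
        exact setIntegral_congr_fun measurableSet_Ioo hradial
    _ = _ := by
        rw [← intervalIntegral.integral_of_le hη.le |>.trans integral_Ioc_eq_integral_Ioo,
          integral_rpow (Or.inl (by linarith)),
          show (finrank ℝ E : ℝ) - 1 - β + 1 = finrank ℝ E - β by ring, zero_rpow hpos.ne',
          sub_zero]
        ring

theorem lintegral_ball_dist_rpow_neg (u : E) {β : ℝ} (hβ : β < finrank ℝ E) {η : ℝ}
    (hη : 0 < η) :
    ∫⁻ v in ball u η, ENNReal.ofReal (dist u v ^ (-β)) ∂μ =
      ENNReal.ofReal (finrank ℝ E * μ.real (ball 0 1) / (finrank ℝ E - β) *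
        η ^ ((finrank ℝ E : ℝ) - β)) := by
  have hpre : (· - u) ⁻¹' ball (0 : E) η = ball u η := by ext v; simp [dist_eq_norm]
  rw [← lintegral_ball_norm_rpow_neg μ hβ hη, ← hpre]
  simp_rw [dist_comm u, dist_eq_norm]
  exact (measurePreserving_sub_right μ u).setLIntegral_comp_preimage_emb
    (measurableEmbedding_subRight u) (fun x => ENNReal.ofReal (‖x‖ ^ (-β))) (ball 0 η)

theorem setLIntegral_ball_rpow_add_indicator_le (u : E) {a b p q D η : ℝ} (ha : 0 ≤ a)
    (hb : 0 ≤ b) (hp : p < finrank ℝ E) (hq : q < finrank ℝ E) (hD : 0 < D) (hη : 0 < η) :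
    ∫⁻ v in ball u D, (ENNReal.ofReal a * ENNReal.ofReal (dist u v ^ (-p)) +
        ENNReal.ofReal b * (Iio η).indicator (fun t => ENNReal.ofReal (t ^ (-q))) (dist u v)) ∂μ ≤
      ENNReal.ofReal
        (a * (finrank ℝ E * μ.real (ball 0 1) / (finrank ℝ E - p) * D ^ ((finrank ℝ E : ℝ) - p)) +
          b * (finrank ℝ E * μ.real (ball 0 1) / (finrank ℝ E - q) *
            η ^ ((finrank ℝ E : ℝ) - q))) := by
  have hball (v : E) : (Iio η).indicator (fun t => ENNReal.ofReal (t ^ (-q))) (dist u v) =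
      (ball u η).indicator (fun v => ENNReal.ofReal (dist u v ^ (-q))) v := by
    by_cases hv : v ∈ ball u η
    · rw [indicator_of_mem hv, indicator_of_mem (by simpa [dist_comm] using hv)]
    · rw [indicator_of_notMem hv, indicator_of_notMem (by simpa [dist_comm] using hv)]
  have hc {β : ℝ} (hβ : β < finrank ℝ E) :
      0 ≤ finrank ℝ E * μ.real (ball (0 : E) 1) / (finrank ℝ E - β) :=
    div_nonneg (by positivity) (by linarith)
  simp_rw [hball]
  rw [lintegral_add_left (by fun_prop), lintegral_const_mul' _ _ ENNReal.ofReal_ne_top,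
    lintegral_const_mul' _ _ ENNReal.ofReal_ne_top]
  calc _ ≤ ENNReal.ofReal a * ∫⁻ v in ball u D, ENNReal.ofReal (dist u v ^ (-p)) ∂μ +
        ENNReal.ofReal b * ∫⁻ v in ball u η, ENNReal.ofReal (dist u v ^ (-q)) ∂μ := by
        gcongr _ + _ * ?_
        exact (setLIntegral_le_lintegral _ _).trans (lintegral_indicator_le _ _)
    _ = _ := by
        have := hc hp
        have := hc hq
        rw [lintegral_ball_dist_rpow_neg μ u hp hD, lintegral_ball_dist_rpow_neg μ u hq hη,
          ← ENNReal.ofReal_mul ha, ← ENNReal.ofReal_mul hb,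
          ← ENNReal.ofReal_add (by positivity) (by positivity)]

end RadialIntegral

section UniformConvergence

variable {h : ℝ → ℝ}

-- The window `[0, 2]` contains every `u + w` with `u, w ∈ [0, 1]`.
def largeIncrementSet (h : ℝ → ℝ) (y : ℕ → ℝ) (δ : ℝ) (k : ℕ) : Set ℝ :=
  Icc 0 2 ∩ ⋃ n ≥ k, {w | δ < |h (y n + w) - h (y n)|}

lemma tendsto_volume_largeIncrementSet (hm : Measurable h)
    (hc : ∀ u, Tendsto (fun x => h (x + u) - h x) atTop (𝓝 0))
    {y : ℕ → ℝ} (hy : Tendsto y atTop atTop) {δ : ℝ} (hδ : 0 < δ) :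
    Tendsto (fun k => volume (largeIncrementSet h y δ k)) atTop (𝓝 0) := by
  have hmeas (k : ℕ) : MeasurableSet (largeIncrementSet h y δ k) :=
    measurableSet_Icc.inter <| .biUnion (to_countable _) fun n _ =>
      measurableSet_lt measurable_const
        ((hm.comp (measurable_const_add _)).sub measurable_const).abs
  have hanti : Antitone (largeIncrementSet h y δ) := fun k k' hkk' =>
    inter_subset_inter_right _ (biUnion_subset_biUnion_left fun n hn => hkk'.trans hn)
  have hempty : ⋂ k, largeIncrementSet h y δ k = ∅ := by
    refine eq_empty_of_forall_notMem fun w hw => ?_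
    have hsmall : ∀ᶠ n in atTop, |h (y n + w) - h (y n)| < δ := by
      simpa using ((hc w).comp hy).abs.eventually_lt_const (by simpa using hδ)
    obtain ⟨k, hk⟩ := eventually_atTop.1 hsmall
    obtain ⟨n, hn, hbig⟩ := mem_iUnion₂.1 (mem_iInter.1 hw k).2
    exact (hk n hn).not_gt hbig
  have := tendsto_measure_iInter_atTop (μ := volume) (fun k => (hmeas k).nullMeasurableSet) hanti
    ⟨0, ((measure_mono inter_subset_left).trans_lt measure_Icc_lt_top).ne⟩
  rwa [hempty, measure_empty] at this

lemma exists_add_notMem_of_volume_lt_half {A B : Set ℝ} (hA : volume A < 1 / 2)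
    (hB : volume B < 1 / 2) (a : ℝ) : ∃ w ∈ Icc (0 : ℝ) 1, a + w ∉ A ∧ w ∉ B := by
  by_contra! hcover
  have : volume (Icc (0 : ℝ) 1) < 1 := calc
    volume (Icc (0 : ℝ) 1) ≤ volume ((fun w => a + w) ⁻¹' A ∪ B) :=
        measure_mono fun w hw => (em _).imp id (hcover w hw)
    _ ≤ volume ((fun w => a + w) ⁻¹' A) + volume B := measure_union_le _ _
    _ < 1 / 2 + 1 / 2 := by rw [measure_preimage_add]; exact ENNReal.add_lt_add hA hB
    _ = 1 := ENNReal.add_halves 1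
  simp at this

theorem eventually_forall_Icc_abs_sub_le (hm : Measurable h)
    (hc : ∀ u, Tendsto (fun x => h (x + u) - h x) atTop (𝓝 0)) {ε : ℝ} (hε : 0 < ε) :
    ∀ᶠ x in atTop, ∀ u ∈ Icc (0 : ℝ) 1, |h (x + u) - h x| ≤ ε := by
  by_contra hbad
  simp only [not_eventually, not_forall, not_le, frequently_atTop] at hbad
  choose x hx u hu hxu using hbad
  have hx_top : Tendsto (fun n : ℕ => x n) atTop atTop :=
    tendsto_atTop_mono (fun n => hx n) tendsto_natCast_atTop_atTop
  have hxu_top : Tendsto (fun n : ℕ => x n + u n) atTop atTop :=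
    tendsto_atTop_add_right_of_le _ 0 hx_top fun n => (hu n).1
  have hsmall {y : ℕ → ℝ} (hy : Tendsto y atTop atTop) :
      ∀ᶠ k in atTop, volume (largeIncrementSet h y (ε / 2) k) < 1 / 2 :=
    (tendsto_volume_largeIncrementSet hm hc hy (half_pos hε)).eventually_lt_const (by norm_num)
  obtain ⟨N, hA, hB⟩ := ((hsmall hx_top).and (hsmall hxu_top)).exists
  obtain ⟨w, hw, hwA, hwB⟩ := exists_add_notMem_of_volume_lt_half hA hB (u N)
  have hle {y : ℕ → ℝ} {v : ℝ} (hv : v ∈ Icc (0 : ℝ) 2)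
      (hvy : v ∉ largeIncrementSet h y (ε / 2) N) : |h (y N + v) - h (y N)| ≤ ε / 2 := by
    by_contra! hgt
    exact hvy ⟨hv, mem_iUnion₂.2 ⟨N, le_rfl, hgt⟩⟩
  have h₁ := hle (y := fun n : ℕ => x n)
    ⟨by linarith [(hu N).1, hw.1], by linarith [(hu N).2, hw.2]⟩ hwA
  have h₂ := hle (y := fun n : ℕ => x n + u n) ⟨hw.1, by linarith [hw.2]⟩ hwB
  have htri := abs_sub_le (h (x N + u N)) (h (x N + u N + w)) (h (x N))
  rw [abs_sub_comm] at h₂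
  simp only [← add_assoc] at h₁
  linarith [hxu N]

end UniformConvergence

lemma abs_sub_le_of_forall_Icc {f : ℝ → ℝ} {ε X : ℝ} (hε : 0 ≤ ε)
    (H : ∀ x ≥ X, ∀ u ∈ Icc (0 : ℝ) 1, |f (x + u) - f x| ≤ ε) {x y : ℝ} (hx : X ≤ x)
    (hxy : x ≤ y) : |f y - f x| ≤ ε * (y - x + 1) := by
  have key (n : ℕ) : ∀ x ≥ X, ∀ y ∈ Icc x (x + n), |f y - f x| ≤ ε * n := by
    induction n with
    | zero =>
      intro x _ y hy
      obtain rfl : y = x := by simpa using hy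
      simp
    | succ n ih =>
      intro x hx y hy
      push_cast at hy ⊢
      by_cases hy1 : y ≤ x + 1
      · have := H x hx (y - x) ⟨by linarith [hy.1], by linarith⟩
        rw [add_sub_cancel] at this
        nlinarith [n.cast_nonneg (α := ℝ)]
      · have h₁ := ih (x + 1) (by linarith) y ⟨by linarith, by linarith [hy.2]⟩
        have h₂ := H x hx 1 ⟨zero_le_one, le_rfl⟩
        have := abs_sub_le (f y) (f (x + 1)) (f x)
        linarith
  calc |f y - f x| ≤ ε * ⌈y - x⌉₊ :=
        key _ x hx y ⟨hxy, by linarith [Nat.le_ceil (y - x)]⟩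
    _ ≤ ε * (y - x + 1) := by
        gcongr; exact (Nat.ceil_lt_add_one (sub_nonneg.2 hxy)).le

lemma Real.exp_abs_log {x : ℝ} (hx : 0 < x) : exp |log x| = max x x⁻¹ := by
  rcases le_total 0 (log x) with hlog | hlog
  · have hx1 : 1 ≤ x := by rwa [log_nonneg_iff hx] at hlog
    rw [abs_of_nonneg hlog, exp_log hx, max_eq_left ((inv_le_one_of_one_le₀ hx1).trans hx1)]
  · have hx1 : x ≤ 1 := by rwa [log_nonpos_iff hx.le] at hlog
    rw [abs_of_nonpos hlog, exp_neg, exp_log hx,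
      max_eq_right (hx1.trans (one_le_inv₀ hx |>.2 hx1))]

structure IsSlowlyVarying (L : ℝ → ℝ) : Prop where
  pos : ∀ x ≥ (0 : ℝ), 0 < L x
  measurable : Measurable L
  tendsto_div : ∀ t > (0 : ℝ), Tendsto (fun r : ℝ => L (t * r) / L r) atTop (𝓝 1)

def PotterBound (L : ℝ → ℝ) (ε R : ℝ) : Prop :=
  ∀ r ≥ R, ∀ s ≥ R, L s ≤ exp ε * L r * max (s / r) (r / s) ^ ε

namespace IsSlowlyVarying

variable {L : ℝ → ℝ}

lemma tendsto_log_comp_exp_sub (hL : IsSlowlyVarying L) (u : ℝ) :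
    Tendsto (fun x => log (L (exp (x + u))) - log (L (exp x))) atTop (𝓝 0) := by
  have hratio := ((hL.tendsto_div (exp u) (exp_pos u)).comp tendsto_exp_atTop).log one_ne_zero
  rw [log_one] at hratio
  refine hratio.congr fun x => ?_
  simp only [Function.comp_apply, exp_add, mul_comm (exp x)]
  exact log_div (hL.pos _ (by positivity)).ne' (hL.pos _ (exp_pos x).le).ne'

theorem exists_potterBound (hL : IsSlowlyVarying L) {ε : ℝ} (hε : 0 < ε) :
    ∃ R > 0, PotterBound L ε R := by
  have hm : Measurable fun x => log (L (exp x)) := (hL.measurable.comp measurable_exp).log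
  obtain ⟨X, hX⟩ := eventually_atTop.1 <|
    eventually_forall_Icc_abs_sub_le hm hL.tendsto_log_comp_exp_sub hε
  refine ⟨exp X, exp_pos X, fun r hr s hs => ?_⟩
  have hr0 : 0 < r := (exp_pos X).trans_le hr
  have hs0 : 0 < s := (exp_pos X).trans_le hs
  have hXr : X ≤ log r := by rwa [le_log_iff_exp_le hr0]
  have hXs : X ≤ log s := by rwa [le_log_iff_exp_le hs0]
  have hlog : log (L s) - log (L r) ≤ ε * (|log (s / r)| + 1) := by
    rw [log_div hs0.ne' hr0.ne']
    rcases le_total (log r) (log s) with hrs | hsr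
    · have := abs_sub_le_of_forall_Icc (f := fun x => log (L (exp x))) hε.le hX hXr hrs
      rw [exp_log hr0, exp_log hs0] at this
      rw [abs_of_nonneg (sub_nonneg.2 hrs)]
      exact (le_abs_self _).trans this
    · have := abs_sub_le_of_forall_Icc (f := fun x => log (L (exp x))) hε.le hX hXs hsr
      rw [exp_log hr0, exp_log hs0, abs_sub_comm] at this
      rw [abs_of_nonpos (sub_nonpos.2 hsr), neg_sub]
      exact (le_abs_self _).trans this
  calc L s = exp (log (L s)) := (exp_log (hL.pos s hs0.le)).symm
    _ ≤ exp (ε + log (L r) + ε * |log (s / r)|) := exp_le_exp.2 (by linarith)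
    _ = exp ε * L r * max (s / r) (r / s) ^ ε := by
        rw [exp_add, exp_add, exp_log (hL.pos r hr0.le), mul_comm ε, exp_mul,
          exp_abs_log (div_pos hs0 hr0), inv_div]

end IsSlowlyVarying

namespace PotterBound

variable {L : ℝ → ℝ} {ε R r : ℝ}

lemma le_mul_rpow_neg (hP : PotterBound L ε R) (hL : IsSlowlyVarying L) (hε : 0 ≤ ε)
    (hr : R ≤ r) (hr0 : 0 < r) {D t : ℝ} (hD : 1 ≤ D) (ht : 0 < t) (htD : t ≤ D)
    (hrt : R ≤ r * t) : L (r * t) ≤ exp ε * (D ^ 2) ^ ε * L r * t ^ (-ε) := by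
  have hmax : max t t⁻¹ ≤ D ^ 2 / t := by
    rw [le_div_iff₀ ht, max_mul_of_nonneg _ _ ht.le, inv_mul_cancel₀ ht.ne']
    exact max_le (by nlinarith) (one_le_pow₀ hD)
  calc L (r * t) ≤ exp ε * L r * max t t⁻¹ ^ ε := by
        simpa [mul_div_assoc, hr0.ne', ht.ne', div_mul_cancel_left₀] using hP r hr (r * t) hrt
    _ ≤ exp ε * L r * (D ^ 2 / t) ^ ε := by
        gcongr
        exact mul_nonneg (exp_pos ε).le (hL.pos r hr0.le).le
    _ = exp ε * (D ^ 2) ^ ε * L r * t ^ (-ε) := by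
        rw [div_rpow (by positivity) ht.le, rpow_neg ht.le]; ring

lemma rpow_div_le (hP : PotterBound L ε R) (hL : IsSlowlyVarying L) (hR : 0 < R) (hr : R ≤ r)
    (κ : ℕ) {s : ℝ} (hs : ε * κ ≤ s) : (R / r) ^ s ≤ (exp ε / L R) ^ κ * L r ^ κ := by
  have hr0 : 0 < r := hR.trans_le hr
  have hRr : R / r ≤ 1 := div_le_one_of_le₀ hr hr0.le
  have hmax : max (R / r) (r / R) = r / R := max_eq_right (hRr.trans ((one_le_div hR).2 hr))
  have hLR := hP r hr R le_rfl
  rw [hmax] at hLR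
  have hbase : (R / r) ^ ε * L R ≤ exp ε * L r := calc
    (R / r) ^ ε * L R ≤ (R / r) ^ ε * (exp ε * L r * (r / R) ^ ε) := by gcongr
    _ = exp ε * L r * (R / r * (r / R)) ^ ε := by
        rw [mul_rpow (by positivity) (by positivity)]; ring
    _ = exp ε * L r := by
        rw [div_mul_div_comm, mul_comm R r, div_self (by positivity), one_rpow, mul_one]
  calc (R / r) ^ s ≤ (R / r) ^ (ε * κ) := rpow_le_rpow_of_exponent_ge (by positivity) hRr hs
    _ = ((R / r) ^ ε) ^ κ := by rw [rpow_mul (by positivity), rpow_natCast]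
    _ ≤ (exp ε / L R * L r) ^ κ := by
        gcongr
        rwa [div_mul_eq_mul_div, le_div_iff₀ (hL.pos R hR.le)]
    _ = (exp ε / L R) ^ κ * L r ^ κ := mul_pow ..

lemma ofReal_pow_mul_rpow_le (hP : PotterBound L ε R) (hL : IsSlowlyVarying L) (hε : 0 ≤ ε)
    (hR : 0 < R) {M : ℝ} (hM : ∀ x ∈ Icc 0 R, L x ≤ M) (κ : ℕ) (q : ℝ) (hr : R ≤ r)
    {D t : ℝ} (hD : 1 ≤ D) (ht : 0 ≤ t) (htD : t ≤ D) :
    ENNReal.ofReal (L (r * t) ^ κ * t ^ (-q)) ≤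
      ENNReal.ofReal ((exp ε * (D ^ 2) ^ ε * L r) ^ κ) * ENNReal.ofReal (t ^ (-(q + ε * κ))) +
      ENNReal.ofReal (M ^ κ) * (Iio (R / r)).indicator (fun t => ENNReal.ofReal (t ^ (-q))) t := by
  have hr0 : 0 < r := hR.trans_le hr
  have hLr : 0 < L r := hL.pos r hr0.le
  have hLrt : 0 ≤ L (r * t) := (hL.pos _ (by positivity)).le
  rcases le_or_gt R (r * t) with hrt | hrt
  · have ht0 : 0 < t := (mul_pos_iff_of_pos_left hr0).1 (hR.trans_le hrt)
    refine le_add_right ?_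
    rw [← ENNReal.ofReal_mul (by positivity)]
    refine ENNReal.ofReal_le_ofReal ?_
    calc L (r * t) ^ κ * t ^ (-q)
        ≤ (exp ε * (D ^ 2) ^ ε * L r * t ^ (-ε)) ^ κ * t ^ (-q) := by
          gcongr; exact hP.le_mul_rpow_neg hL hε hr hr0 hD ht0 htD hrt
      _ = (exp ε * (D ^ 2) ^ ε * L r) ^ κ * t ^ (-(q + ε * κ)) := by
          rw [mul_pow, ← rpow_natCast (t ^ (-ε)), ← rpow_mul ht0.le, mul_assoc, ← rpow_add ht0]
          ring_nf
  · have htη : t ∈ Iio (R / r) := by rw [mem_Iio, lt_div_iff₀ hr0]; linarith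
    have hM0 : 0 ≤ M := (hL.pos 0 le_rfl).le.trans (hM 0 ⟨le_rfl, hR.le⟩)
    rw [indicator_of_mem htη, ← ENNReal.ofReal_mul (pow_nonneg hM0 κ)]
    refine le_add_left (ENNReal.ofReal_le_ofReal ?_)
    gcongr
    exact hM _ ⟨by positivity, hrt.le⟩

end PotterBound

section

variable {E : Type*} [NormedAddCommGroup E] [NormedSpace ℝ E] [Nontrivial E] [FiniteDimensional ℝ E]
  [MeasurableSpace E] [BorelSpace E] (μ : Measure E) [μ.IsAddHaarMeasure] {L : ℝ → ℝ}

theorem IsSlowlyVarying.exists_setLIntegral_ball_le (hL : IsSlowlyVarying L)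
    (hLloc : ∀ T > (0 : ℝ), ∃ M : ℝ, ∀ x ∈ Icc (0 : ℝ) T, L x ≤ M) (κ : ℕ) {q : ℝ}
    (hq : q < finrank ℝ E) {D : ℝ} (hD : 1 ≤ D) :
    ∃ K > 0, ∃ R > 0, ∀ r ≥ R, ∀ u : E,
      ∫⁻ v in ball u D, ENNReal.ofReal (L (r * dist u v) ^ κ * dist u v ^ (-q)) ∂μ ≤
        ENNReal.ofReal (K * L r ^ κ) := by
  set n : ℝ := (finrank ℝ E : ℝ)
  -- Potter exponent, small enough that `p = q + εκ < n`.
  set ε : ℝ := (n - q) / (2 * (κ + 1))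
  have hε : 0 < ε := div_pos (by linarith) (by positivity)
  have hεκ : ε * κ < n - q := by
    rw [div_mul_eq_mul_div, div_lt_iff₀ (by positivity)]; nlinarith
  set p : ℝ := q + ε * κ
  have hp : p < n := by linarith
  obtain ⟨R, hR, hP⟩ := hL.exists_potterBound hε
  obtain ⟨M, hM⟩ := hLloc R hR
  have hM0 : 0 ≤ M := (hL.pos 0 le_rfl).le.trans (hM 0 ⟨le_rfl, hR.le⟩)
  have hLR := hL.pos R hR.le
  set c : ℝ → ℝ := fun β => n * μ.real (ball 0 1) / (n - β)
  have hc {β : ℝ} (hβ : β < n) : 0 < c β := by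
    have : 0 < μ.real (ball (0 : E) 1) :=
      ENNReal.toReal_pos (measure_ball_pos μ 0 one_pos).ne' measure_ball_lt_top.ne
    have hn : 0 < n := Nat.cast_pos.2 finrank_pos
    exact div_pos (by positivity) (by linarith)
  have hcp := hc hp
  have hcq := hc hq
  set A : ℝ := exp ε * (D ^ 2) ^ ε
  refine ⟨A ^ κ * c p * D ^ (n - p) + M ^ κ * c q * (exp ε / L R) ^ κ, by positivity, R, hR,
    fun r hr u => ?_⟩
  have hr0 : 0 < r := hR.trans_le hr
  have hLr : 0 < L r := hL.pos r hr0.le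
  calc ∫⁻ v in ball u D, ENNReal.ofReal (L (r * dist u v) ^ κ * dist u v ^ (-q)) ∂μ
      ≤ ∫⁻ v in ball u D, (ENNReal.ofReal ((A * L r) ^ κ) * ENNReal.ofReal (dist u v ^ (-p)) +
          ENNReal.ofReal (M ^ κ) *
            (Iio (R / r)).indicator (fun t => ENNReal.ofReal (t ^ (-q))) (dist u v)) ∂μ :=
        setLIntegral_mono' measurableSet_ball fun v hv =>
          hP.ofReal_pow_mul_rpow_le hL hε.le hR hM κ q hr hD dist_nonneg (mem_ball'.1 hv).le
    _ ≤ ENNReal.ofReal ((A * L r) ^ κ * (c p * D ^ (n - p)) + M ^ κ * (c q * (R / r) ^ (n - q))) :=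
        setLIntegral_ball_rpow_add_indicator_le μ u (by positivity) (by positivity) hp hq
          (by positivity) (by positivity)
    _ ≤ ENNReal.ofReal ((A * L r) ^ κ * (c p * D ^ (n - p)) +
          M ^ κ * (c q * ((exp ε / L R) ^ κ * L r ^ κ))) := by
        gcongr; exact hP.rpow_div_le hL hR hr κ hεκ.le
    _ = _ := by ring_nf

theorem IsSlowlyVarying.exists_lintegral_lintegral_le (hL : IsSlowlyVarying L)
    (hLloc : ∀ T > (0 : ℝ), ∃ M : ℝ, ∀ x ∈ Icc (0 : ℝ) T, L x ≤ M) (κ : ℕ) {q : ℝ}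
    (hq : q < finrank ℝ E) {Δ : Set E} (hΔ : Bornology.IsBounded Δ) :
    ∃ C > 0, ∃ r₀ > 0, ∀ r > r₀,
      ∫⁻ u in Δ, ∫⁻ v in Δ, ENNReal.ofReal (L (r * dist u v) ^ κ * dist u v ^ (-q)) ∂μ ∂μ ≤
        ENNReal.ofReal (C * L r ^ κ) := by
  obtain ⟨ρ, hρ, hΔρ⟩ := hΔ.subset_ball_lt 1 0
  obtain ⟨K, hK, R, hR, hbound⟩ :=
    hL.exists_setLIntegral_ball_le μ hLloc κ hq (D := 2 * ρ) (by linarith)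
  have hρ_pos : 0 < μ.real (ball (0 : E) ρ) :=
    ENNReal.toReal_pos (measure_ball_pos μ 0 (by linarith)).ne' measure_ball_lt_top.ne
  refine ⟨K * μ.real (ball 0 ρ), by positivity, R, hR, fun r hr => ?_⟩
  have hinner (u : E) (hu : u ∈ Δ) :
      ∫⁻ v in Δ, ENNReal.ofReal (L (r * dist u v) ^ κ * dist u v ^ (-q)) ∂μ ≤
        ENNReal.ofReal (K * L r ^ κ) := by
    refine (lintegral_mono_set fun v hv => ?_).trans (hbound r hr.le u)
    have := dist_triangle_right v u 0
    rw [mem_ball]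
    linarith [mem_ball.1 (hΔρ hv), mem_ball.1 (hΔρ hu)]
  calc _ ≤ ∫⁻ _ in ball 0 ρ, ENNReal.ofReal (K * L r ^ κ) ∂μ :=
        (setLIntegral_mono measurable_const hinner).trans (lintegral_mono_set hΔρ)
    _ = ENNReal.ofReal (K * μ.real (ball 0 ρ) * L r ^ κ) := by
        have := hL.pos r (by linarith)
        rw [setLIntegral_const, ← ofReal_measureReal, ← ENNReal.ofReal_mul (by positivity)]
        ring_nf

end

theorem slowly_varying_double_integral_bound_general
    (L : ℝ → ℝ) (hLpos : ∀ x ≥ (0 : ℝ), 0 < L x) (hLmeas : Measurable L)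
    (hLslow : ∀ t > (0 : ℝ), Tendsto (fun r : ℝ => L (t * r) / L r) atTop (𝓝 1))
    (hLloc : ∀ T > (0 : ℝ), ∃ M : ℝ, ∀ x ∈ Set.Icc (0 : ℝ) T, L x ≤ M)
    (κ : ℕ) (α : ℝ) (hακ : α * κ < 2)
    (Δ : Set (EuclideanSpace ℝ (Fin 2))) (hbd : Bornology.IsBounded Δ) :
    ∃ C > (0 : ℝ), ∃ r₀ > (0 : ℝ), ∀ r > r₀,
      (∫⁻ u in Δ, ∫⁻ v in Δ,
        ENNReal.ofReal (L (r * dist u v) ^ κ * dist u v ^ (-(α * κ)))) ≤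
      ENNReal.ofReal (C * L r ^ κ) :=
  (IsSlowlyVarying.mk hLpos hLmeas hLslow).exists_lintegral_lintegral_le volume hLloc κ
    (by simpa using hακ) hbd

/-- For a slowly varying function `L`, locally bounded and positive, an integer `κ ≥ 1`
and `α > 0` with `ακ < 2`, and a bounded measurable `Δ ⊂ ℝ²` of positive measure,
there are `C > 0` and `r₀ > 0` such that for all `r > r₀`,
`∫_Δ ∫_Δ L(r‖u−v‖)^κ ‖u−v‖^{−ακ} du dv ≤ C L(r)^κ`. -/
theorem slowly_varying_double_integral_bound
    (L : ℝ → ℝ) (hLpos : ∀ x ≥ (0 : ℝ), 0 < L x) (hLmeas : Measurable L)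
    (hLslow : ∀ t > (0 : ℝ), Tendsto (fun r : ℝ => L (t * r) / L r) atTop (𝓝 1))
    (hLloc : ∀ T > (0 : ℝ), ∃ M : ℝ, ∀ x ∈ Set.Icc (0 : ℝ) T, L x ≤ M)
    (κ : ℕ) (hκ : 1 ≤ κ) (α : ℝ) (hα : 0 < α) (hακ : α * κ < 2)
    (Δ : Set (EuclideanSpace ℝ (Fin 2))) (hbd : Bornology.IsBounded Δ)
    (hmeas : MeasurableSet Δ) (hpos : 0 < volume Δ) :
    ∃ C > (0 : ℝ), ∃ r₀ > (0 : ℝ), ∀ r > r₀,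
      (∫⁻ u in Δ, ∫⁻ v in Δ,
        ENNReal.ofReal (L (r * dist u v) ^ κ * dist u v ^ (-(α * κ)))) ≤
      ENNReal.ofReal (C * L r ^ κ) :=
  slowly_varying_double_integral_bound_general L hLpos hLmeas hLslow hLloc κ α hακ Δ hbd
end

section
/- Let L : [0,∞) → (0,∞) be slowly varying at infinity and bounded on every bounded interval, let κ ≥ 1 be an integer and α > 0 with ακ < 2, let Δ ⊂ ℝ² be a bounded measurable set of positive Lebesgue measure, and let h : Δ → ℝ be a bounded measurable function. Then lim_{r→∞} L(r)^{−κ} ∫_Δ ∫_Δ L(r ‖u − v‖)^κ h(u) h(v) ‖u − v‖^{−ακ} du dv = ∫_Δ ∫_Δ h(u) h(v) ‖u − v‖^{−ακ} du dv, and the limit integral is finite. -/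
/-!
Put `ℓ x = log L (exp x)`. Slow variation says `ℓ (x + u) - ℓ x → 0` for each `u`; since `ℓ` is
measurable this is uniform in `u ∈ [0, 1]` (for large `x`, the points of an interval where `ℓ`
is nearly constant around `x` and around `x + u` fill more than half of it, so they meet).
Chaining unit steps, `ℓ` grows sublinearly, and together with the boundedness of `L` on bounded
intervals this gives a Potter-type bound `L (r d) ≤ C d ^ (-ε) L r` for large `r` and
`0 < d ≤ diam Δ`. Applied to `L ^ κ` with `ακ + ε < 2`, it dominates the integrand by a
multiple of `‖u - v‖ ^ (-(ακ + ε))`, integrable on `Δ × Δ`, and dominated convergence concludes.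
-/

open MeasureTheory Filter Topology Set

theorem MeasureTheory.Measure.ae_prod_fst_ne_snd {α : Type*} [MeasurableSpace α]
    [MeasurableEq α] (μ ν : Measure α) [SFinite ν] [NullSingletonClass ν] :
    ∀ᵐ q ∂μ.prod ν, q.1 ≠ q.2 := by
  have hdiag : μ.prod ν (diagonal α) = 0 := by
    rw [Measure.prod_apply measurableSet_diagonal]
    simp [preimage, mem_diagonal_iff]
  exact measure_eq_zero_iff_ae_notMem.1 hdiag

section Kernel

variable {E : Type*} [NormedAddCommGroup E] [NormedSpace ℝ E] [FiniteDimensional ℝ E]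
  [MeasurableSpace E] [BorelSpace E] {μ : Measure E} [μ.IsAddHaarMeasure]

theorem MeasureTheory.LocallyIntegrable.integrableOn_prod_comp_sub {F : Type*}
    [NormedAddCommGroup F] {f : E → F} (hf : LocallyIntegrable f μ) {s : Set E}
    (hs : Bornology.IsBounded s) :
    IntegrableOn (fun q : E × E => f (q.1 - q.2)) (s ×ˢ s) (μ.prod μ) := by
  obtain ⟨R, hR⟩ := hs.subset_closedBall 0
  set B := Metric.closedBall (0 : E) R
  have hK : Integrable ((Metric.closedBall (0 : E) (2 * R)).indicator f) μ :=
    (integrable_indicator_iff measurableSet_closedBall).2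
      (hf.integrableOn_isCompact (isCompact_closedBall _ _))
  have : IsFiniteMeasure (μ.restrict B) := isFiniteMeasure_restrict.2 measure_closedBall_lt_top.ne
  have hKsub : IntegrableOn
      (fun q : E × E => (Metric.closedBall (0 : E) (2 * R)).indicator f (q.1 - q.2))
      (univ ×ˢ B) (μ.prod μ) := by
    rw [IntegrableOn, ← Measure.prod_restrict, Measure.restrict_univ]
    exact ((measurePreserving_sub_prod μ (μ.restrict B)).integrable_comp
      (hK.comp_fst _).aestronglyMeasurable).2 (hK.comp_fst _)
  refine ((hKsub.mono_set (prod_mono (subset_univ B) subset_rfl)).congr_fun (fun q hq => ?_)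
    (measurableSet_closedBall.prod measurableSet_closedBall)).mono_set (prod_mono hR hR)
  refine indicator_of_mem ?_ f
  have h1 := mem_closedBall_zero_iff.1 hq.1
  have h2 := mem_closedBall_zero_iff.1 hq.2
  exact mem_closedBall_zero_iff.2 ((norm_sub_le _ _).trans (by linarith))

theorem integrableOn_prod_mul_dist_rpow (hE : 1 ≤ Module.finrank ℝ E) {s : Set E}
    (hs : Bornology.IsBounded s) (hsm : MeasurableSet s) {h : E → ℝ} (hh : Measurable h)
    {M : ℝ} (hM : ∀ x ∈ s, |h x| ≤ M) {β : ℝ} (hβ : β < Module.finrank ℝ E) :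
    IntegrableOn (fun q : E × E => h q.1 * h q.2 * dist q.1 q.2 ^ (-β)) (s ×ˢ s)
      (μ.prod μ) := by
  have hker : LocallyIntegrable (fun x : E => ‖x‖ ^ (-β)) μ :=
    locallyIntegrable_of_norm_le_rpow hE hβ (C := 1)
      (Eventually.of_forall fun x => by
        rw [one_mul, Real.norm_of_nonneg (Real.rpow_nonneg (norm_nonneg x) _)])
      (measurable_norm.pow_const _).aestronglyMeasurable
  simp_rw [dist_eq_norm]
  refine (hker.integrableOn_prod_comp_sub hs).bdd_mul (c := M * M)
    ((hh.comp measurable_fst).mul (hh.comp measurable_snd)).aestronglyMeasurable ?_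
  filter_upwards [ae_restrict_mem (hsm.prod hsm)] with q ⟨h1, h2⟩
  rw [norm_mul]
  exact mul_le_mul (hM _ h1) (hM _ h2) (norm_nonneg _) ((abs_nonneg _).trans (hM _ h1))

end Kernel

theorem MeasureTheory.tendstoInMeasure_of_tendsto_ae_of_isCountablyGenerated {α ι E : Type*}
    [MeasurableSpace α] {μ : Measure α} [IsFiniteMeasure μ] [PseudoEMetricSpace E]
    {l : Filter ι} [l.IsCountablyGenerated] {f : ι → α → E} {g : α → E}
    (hf : ∀ i, AEStronglyMeasurable (f i) μ)
    (hfg : ∀ᵐ x ∂μ, Tendsto (fun i => f i x) l (𝓝 (g x))) :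
    TendstoInMeasure μ f l g := fun ε hε =>
  tendsto_iff_seq_tendsto.2 fun u hu =>
    tendstoInMeasure_of_tendsto_ae (fun n => hf (u n)) (hfg.mono fun _ hx => hx.comp hu) ε hε

theorem tendstoUniformlyOn_Icc_add_sub_of_measurable {ℓ : ℝ → ℝ} (hℓ : Measurable ℓ)
    (h : ∀ u, Tendsto (fun x => ℓ (x + u) - ℓ x) atTop (𝓝 0)) :
    TendstoUniformlyOn (fun x u => ℓ (x + u) - ℓ x) 0 atTop (Icc 0 1) := by
  rw [Metric.tendstoUniformlyOn_iff]
  intro ε hε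
  set F : ℝ → ℝ → ℝ := fun y w => ℓ (y + w) - ℓ y
  set bad : ℝ → Set ℝ := fun y => {w | ε / 2 ≤ dist (F y w) 0} ∩ Icc (-1) 2
  have hF : TendstoInMeasure (volume.restrict (Icc (-1 : ℝ) 2)) F atTop 0 :=
    tendstoInMeasure_of_tendsto_ae_of_isCountablyGenerated
      (fun y => ((hℓ.comp (measurable_const_add y)).sub_const _).aestronglyMeasurable)
      (ae_of_all _ h)
  have hbad : ∀ᶠ y in atTop, volume (bad y) < 1 := by
    filter_upwards [(tendstoInMeasure_iff_dist.1 hF _ (half_pos hε)).eventually_lt_const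
      zero_lt_one] with y hy
    rwa [Measure.restrict_apply' measurableSet_Icc] at hy
  obtain ⟨Y, hY⟩ := eventually_atTop.1 hbad
  filter_upwards [eventually_ge_atTop Y] with x hx u hu
  -- `[0, 2]` is not covered by `bad x` and the translate of `bad (x + u)`, each of measure `< 1`
  obtain ⟨w, hwx, hwu⟩ : ∃ w, dist (F x w) 0 < ε / 2 ∧ dist (F (x + u) (w - u)) 0 < ε / 2 := by
    by_contra! hall
    have hcover : Icc (0 : ℝ) 2 ⊆ bad x ∪ (fun w => w + -u) ⁻¹' bad (x + u) := by
      intro w hw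
      by_cases hwx : ε / 2 ≤ dist (F x w) 0
      · exact Or.inl ⟨hwx, by constructor <;> linarith [hw.1, hw.2]⟩
      · refine Or.inr ⟨hall w (not_le.1 hwx), ?_⟩
        constructor <;> linarith [hw.1, hw.2, hu.1, hu.2]
    have hvol := (measure_mono (μ := volume) hcover).trans (measure_union_le _ _)
    rw [Real.volume_Icc, measure_preimage_add_right] at hvol
    have := hvol.trans_lt (ENNReal.add_lt_add (hY x hx) (hY _ (by linarith [hu.1])))
    norm_num at this
  have hsplit : ℓ (x + u) - ℓ x = F x w - F (x + u) (w - u) := by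
    simp only [F, show x + u + (w - u) = x + w by ring]; ring
  rw [Real.dist_eq, sub_zero] at hwx hwu
  rw [Pi.zero_apply, dist_zero_left, Real.norm_eq_abs, hsplit]
  linarith [abs_sub (F x w) (F (x + u) (w - u))]

theorem abs_sub_le_mul_add_one_of_forall_Icc {ℓ : ℝ → ℝ} {X ε : ℝ}
    (h : ∀ x ≥ X, ∀ u ∈ Icc (0 : ℝ) 1, |ℓ (x + u) - ℓ x| ≤ ε) {x : ℝ} (hx : X ≤ x) {s : ℝ}
    (hs : 0 ≤ s) : |ℓ (x + s) - ℓ x| ≤ ε * (s + 1) := by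
  have hε : 0 ≤ ε := by simpa using h X le_rfl 0 ⟨le_rfl, zero_le_one⟩
  suffices ∀ n : ℕ, ∀ x ≥ X, ∀ s ∈ Icc (0 : ℝ) n, |ℓ (x + s) - ℓ x| ≤ ε * n from
    (this _ x hx s ⟨hs, Nat.le_ceil s⟩).trans
      (mul_le_mul_of_nonneg_left (Nat.ceil_lt_add_one hs).le hε)
  intro n
  induction n with
  | zero => intro x _ s hs; simp [le_antisymm hs.2 (by simpa using hs.1)]
  | succ n ih =>
    intro x hx s hs
    rcases le_total s 1 with hs1 | hs1
    · exact (h x hx s ⟨hs.1, hs1⟩).trans (le_mul_of_one_le_right hε (Nat.one_le_cast.2 n.succ_pos))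
    · have h1 := ih (x + 1) (by linarith) (s - 1) ⟨by linarith, by push_cast at hs; linarith [hs.2]⟩
      have h2 := h x hx 1 ⟨zero_le_one, le_rfl⟩
      rw [show x + 1 + (s - 1) = x + s by ring] at h1
      calc |ℓ (x + s) - ℓ x| ≤ |ℓ (x + s) - ℓ (x + 1)| + |ℓ (x + 1) - ℓ x| := abs_sub_le _ _ _
        _ ≤ ε * (n + 1 : ℕ) := by push_cast; linarith

theorem exists_le_add_mul_abs_sub_of_measurable {ℓ : ℝ → ℝ} (hℓ : Measurable ℓ)
    (h : ∀ u, Tendsto (fun x => ℓ (x + u) - ℓ x) atTop (𝓝 0))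
    (hbdd : ∀ b, BddAbove (ℓ '' Iic b)) {ε : ℝ} (hε : 0 < ε) :
    ∃ X c, ∀ x ≥ X, ∀ y, ℓ y ≤ ℓ x + c + ε * |y - x| := by
  obtain ⟨X, hX⟩ := eventually_atTop.1
    (Metric.tendstoUniformlyOn_iff.1 (tendstoUniformlyOn_Icc_add_sub_of_measurable hℓ h) ε hε)
  have hlin : ∀ a ≥ X, ∀ b ≥ a, |ℓ b - ℓ a| ≤ ε * (b - a + 1) := fun a ha b hab => by
    simpa using abs_sub_le_mul_add_one_of_forall_Icc
      (fun x hx u hu => by simpa [Real.dist_eq, abs_sub_comm] using (hX x hx u hu).le) ha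
      (sub_nonneg.2 hab)
  obtain ⟨B, hB⟩ := hbdd X
  have hXB : ℓ X ≤ B := hB ⟨X, mem_Iic.2 le_rfl, rfl⟩
  refine ⟨X, ε + (B - ℓ X), fun x hx y => ?_⟩
  rcases le_total X y with hy | hy
  · rcases le_total x y with hxy | hxy
    · have := (abs_le.1 (hlin x hx y hxy)).2
      rw [abs_of_nonneg (sub_nonneg.2 hxy)]
      linarith
    · have := (abs_le.1 (hlin y hy x hxy)).1
      rw [abs_of_nonpos (sub_nonpos.2 hxy)]
      linarith
  · have := (abs_le.1 (hlin X le_rfl x hx)).1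
    have hyB : ℓ y ≤ B := hB ⟨y, hy, rfl⟩
    rw [abs_of_nonpos (by linarith : y - x ≤ 0)]
    linarith [mul_le_mul_of_nonneg_left hy hε.le]

def SlowlyVarying (L : ℝ → ℝ) : Prop :=
  ∀ t > (0 : ℝ), Tendsto (fun r => L (t * r) / L r) atTop (𝓝 1)

namespace SlowlyVarying

variable {L : ℝ → ℝ}

theorem pow (hL : SlowlyVarying L) (n : ℕ) : SlowlyVarying (fun x => L x ^ n) := fun t ht => by
  simpa [div_pow] using (hL t ht).pow n

theorem tendsto_log_comp_exp_add_sub (hL : SlowlyVarying L) (hLpos : ∀ x ≥ (0 : ℝ), 0 < L x)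
    (u : ℝ) :
    Tendsto (fun x => Real.log (L (Real.exp (x + u))) - Real.log (L (Real.exp x))) atTop
      (𝓝 0) := by
  have := ((hL _ (Real.exp_pos u)).comp Real.tendsto_exp_atTop).log one_ne_zero
  rw [Real.log_one] at this
  refine this.congr fun x => ?_
  rw [Function.comp_apply, Real.log_div (hLpos _ (by positivity)).ne' (hLpos _ (by positivity)).ne',
    ← Real.exp_add, add_comm u]

theorem exists_le_mul_rpow_mul (hL : SlowlyVarying L) (hLpos : ∀ x ≥ (0 : ℝ), 0 < L x)
    (hLmeas : Measurable L) (hLloc : ∀ T > (0 : ℝ), ∃ M : ℝ, ∀ x ∈ Icc (0 : ℝ) T, L x ≤ M)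
    {ε : ℝ} (hε : 0 < ε) (D : ℝ) :
    ∃ r₀ > 0, ∃ C, ∀ r ≥ r₀, ∀ d ∈ Ioc 0 D, L (r * d) ≤ C * d ^ (-ε) * L r := by
  set ℓ : ℝ → ℝ := fun x => Real.log (L (Real.exp x))
  have hbdd : ∀ b, BddAbove (ℓ '' Iic b) := fun b => by
    obtain ⟨M, hM⟩ := hLloc _ (Real.exp_pos b)
    refine ⟨Real.log M, forall_mem_image.2 fun y hy => Real.log_le_log (hLpos _ (by positivity))
      (hM _ ⟨(Real.exp_pos y).le, Real.exp_le_exp.2 hy⟩)⟩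
  obtain ⟨X, c, hXc⟩ := exists_le_add_mul_abs_sub_of_measurable (ℓ := ℓ)
    ((hLmeas.comp Real.measurable_exp).log) (hL.tendsto_log_comp_exp_add_sub hLpos) hbdd hε
  set D' := max D 1
  have hD' : 0 < D' := zero_lt_one.trans_le (le_max_right _ _)
  refine ⟨Real.exp X, Real.exp_pos X, Real.exp c * D' ^ (2 * ε), fun r hr d hd => ?_⟩
  have hr0 : 0 < r := (Real.exp_pos X).trans_le hr
  have hLr := hLpos r hr0.le
  have hℓ : ∀ s > 0, ℓ (Real.log s) = Real.log (L s) := fun s hs => by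
    simp only [ℓ, Real.exp_log hs]
  have key := hXc (Real.log r) (Real.le_log_iff_exp_le hr0 |>.2 hr) (Real.log (r * d))
  rw [hℓ _ hr0, hℓ _ (mul_pos hr0 hd.1), Real.log_mul hr0.ne' hd.1.ne', add_sub_cancel_left]
    at key
  have hlogd : |Real.log d| ≤ 2 * Real.log D' - Real.log d := by
    have h1 := Real.log_le_log hd.1 (hd.2.trans (le_max_left D 1))
    have h2 := Real.log_nonneg (le_max_right D 1)
    exact abs_le.2 ⟨by linarith, by linarith⟩
  calc L (r * d) = Real.exp (Real.log (L (r * d))) :=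
        (Real.exp_log (hLpos _ (mul_pos hr0 hd.1).le)).symm
    _ ≤ Real.exp (Real.log (L r) + c + ε * (2 * Real.log D' - Real.log d)) :=
        Real.exp_le_exp.2 (key.trans (by gcongr))
    _ = Real.exp c * D' ^ (2 * ε) * d ^ (-ε) * L r := by
        rw [Real.rpow_def_of_pos hD', Real.rpow_def_of_pos hd.1, ← Real.exp_log hLr,
          ← Real.exp_add, ← Real.exp_add, ← Real.exp_add, Real.exp_log hLr]
        ring_nf

theorem tendsto_integral_div_mul (hL : SlowlyVarying L) (hLpos : ∀ x ≥ (0 : ℝ), 0 < L x)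
    (hLmeas : Measurable L) (hLloc : ∀ T > (0 : ℝ), ∃ M : ℝ, ∀ x ∈ Icc (0 : ℝ) T, L x ≤ M)
    {X : Type*} [MeasurableSpace X] {μ : Measure X} {ρ f : X → ℝ} (hρ : Measurable ρ)
    (hρpos : ∀ᵐ x ∂μ, 0 < ρ x) {D : ℝ} (hρD : ∀ᵐ x ∂μ, ρ x ≤ D)
    (hf : AEStronglyMeasurable f μ) {ε : ℝ} (hε : 0 < ε)
    (hfε : Integrable (fun x => ρ x ^ (-ε) * f x) μ) :
    Tendsto (fun r => ∫ x, L (r * ρ x) / L r * f x ∂μ) atTop (𝓝 (∫ x, f x ∂μ)) := by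
  obtain ⟨r₀, hr₀, C, hC⟩ := hL.exists_le_mul_rpow_mul hLpos hLmeas hLloc hε D
  refine tendsto_integral_filter_of_dominated_convergence (fun x => C * ‖ρ x ^ (-ε) * f x‖)
    (Eventually.of_forall fun r =>
      ((hLmeas.comp (hρ.const_mul r)).div_const _).aestronglyMeasurable.mul hf)
    ?_ (hfε.norm.const_mul C) ?_
  · filter_upwards [eventually_ge_atTop r₀] with r hr
    filter_upwards [hρpos, hρD] with x hx hxD
    have hLr := hLpos r (hr₀.le.trans hr)
    have hLrx := hLpos (r * ρ x) (mul_pos (hr₀.trans_le hr) hx).le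
    rw [norm_mul, norm_mul, Real.norm_of_nonneg (Real.rpow_nonneg hx.le _),
      Real.norm_of_nonneg (div_nonneg hLrx.le hLr.le), ← mul_assoc]
    gcongr
    rw [div_le_iff₀ hLr]
    exact hC r hr _ ⟨hx, hxD⟩
  · filter_upwards [hρpos] with x hx
    simpa [mul_comm] using (hL _ hx).mul_const (f x)

end SlowlyVarying

theorem slowly_varying_double_integral_limit_general
    (L : ℝ → ℝ) (hLpos : ∀ x ≥ (0 : ℝ), 0 < L x) (hLmeas : Measurable L)
    (hLslow : ∀ t > (0 : ℝ), Tendsto (fun r : ℝ => L (t * r) / L r) atTop (𝓝 1))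
    (hLloc : ∀ T > (0 : ℝ), ∃ M : ℝ, ∀ x ∈ Set.Icc (0 : ℝ) T, L x ≤ M)
    (κ : ℕ) (α : ℝ) (hακ : α * κ < 2)
    (Δ : Set (EuclideanSpace ℝ (Fin 2))) (hbd : Bornology.IsBounded Δ)
    (hmeas : MeasurableSet Δ)
    (h : EuclideanSpace ℝ (Fin 2) → ℝ) (hhmeas : Measurable h)
    (hhbdd : ∃ M : ℝ, ∀ x ∈ Δ, |h x| ≤ M) :
    IntegrableOn
      (fun q : EuclideanSpace ℝ (Fin 2) × EuclideanSpace ℝ (Fin 2) =>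
        h q.1 * h q.2 * dist q.1 q.2 ^ (-(α * κ))) (Δ ×ˢ Δ) ∧
    Tendsto (fun r : ℝ =>
        (∫ q in Δ ×ˢ Δ, L (r * dist q.1 q.2) ^ κ * h q.1 * h q.2 * dist q.1 q.2 ^ (-(α * κ))) /
          L r ^ κ)
      atTop
      (𝓝 (∫ q in Δ ×ˢ Δ, h q.1 * h q.2 * dist q.1 q.2 ^ (-(α * κ)))) := by
  obtain ⟨M, hM⟩ := hhbdd
  have hint (β : ℝ) (hβ : β < 2) :
      IntegrableOn (fun q : _ × _ => h q.1 * h q.2 * dist q.1 q.2 ^ (-β)) (Δ ×ˢ Δ) := by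
    rw [Measure.volume_eq_prod]
    exact integrableOn_prod_mul_dist_rpow (by simp) hbd hmeas hhmeas hM (by simpa using hβ)
  refine ⟨hint _ hακ, ?_⟩
  have hdist_pos : ∀ᵐ q ∂(volume.restrict (Δ ×ˢ Δ)), 0 < dist q.1 q.2 :=
    ae_restrict_of_ae ((Measure.ae_prod_fst_ne_snd volume volume).mono fun _ => dist_pos.2)
  have hdist_le : ∀ᵐ q ∂(volume.restrict (Δ ×ˢ Δ)), dist q.1 q.2 ≤ Metric.diam Δ := by
    filter_upwards [ae_restrict_mem (hmeas.prod hmeas)] with q hq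
    exact Metric.dist_le_diam_of_mem hbd hq.1 hq.2
  have hδ : 0 < (2 - α * κ) / 2 := by linarith
  have hdom : Integrable (fun q => dist q.1 q.2 ^ (-((2 - α * κ) / 2)) *
      (h q.1 * h q.2 * dist q.1 q.2 ^ (-(α * κ)))) (volume.restrict (Δ ×ˢ Δ)) := by
    refine (hint (α * κ + (2 - α * κ) / 2) (by linarith)).congr ?_
    filter_upwards [hdist_pos] with q hq
    rw [neg_add, Real.rpow_add hq]
    ring
  refine ((SlowlyVarying.pow hLslow κ).tendsto_integral_div_mul
    (fun x hx => pow_pos (hLpos x hx) κ) (hLmeas.pow_const κ) (fun T hT => ?_) measurable_dist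
    hdist_pos hdist_le (hint _ hακ).aestronglyMeasurable hδ hdom).congr fun r => ?_
  · obtain ⟨C, hC⟩ := hLloc T hT
    exact ⟨C ^ κ, fun x hx => pow_le_pow_left₀ (hLpos x hx.1).le (hC x hx) κ⟩
  · rw [← integral_div]
    congr 1 with q
    ring

/-- For a slowly varying `L`, an integer `κ ≥ 1`, `α > 0` with `ακ < 2`, a bounded measurable
`Δ ⊂ ℝ²` of positive measure and a bounded measurable `h` on `Δ`, the weighted integral with
kernel `L(r‖u−v‖)^κ ‖u−v‖^{−ακ}`, normalised by `L(r)^κ`, converges as `r → ∞` to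
`∫_Δ ∫_Δ h(u) h(v) ‖u−v‖^{−ακ} du dv`, which is finite. -/
theorem slowly_varying_double_integral_limit
    (L : ℝ → ℝ) (hLpos : ∀ x ≥ (0 : ℝ), 0 < L x) (hLmeas : Measurable L)
    (hLslow : ∀ t > (0 : ℝ), Tendsto (fun r : ℝ => L (t * r) / L r) atTop (𝓝 1))
    (hLloc : ∀ T > (0 : ℝ), ∃ M : ℝ, ∀ x ∈ Set.Icc (0 : ℝ) T, L x ≤ M)
    (κ : ℕ) (hκ : 1 ≤ κ) (α : ℝ) (hα : 0 < α) (hακ : α * κ < 2)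
    (Δ : Set (EuclideanSpace ℝ (Fin 2))) (hbd : Bornology.IsBounded Δ)
    (hmeas : MeasurableSet Δ) (hpos : 0 < volume Δ)
    (h : EuclideanSpace ℝ (Fin 2) → ℝ) (hhmeas : Measurable h)
    (hhbdd : ∃ M : ℝ, ∀ x ∈ Δ, |h x| ≤ M) :
    IntegrableOn
      (fun q : EuclideanSpace ℝ (Fin 2) × EuclideanSpace ℝ (Fin 2) =>
        h q.1 * h q.2 * dist q.1 q.2 ^ (-(α * κ))) (Δ ×ˢ Δ) ∧
    Tendsto (fun r : ℝ =>
        (∫ q in Δ ×ˢ Δ, L (r * dist q.1 q.2) ^ κ * h q.1 * h q.2 * dist q.1 q.2 ^ (-(α * κ))) /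
          L r ^ κ)
      atTop
      (𝓝 (∫ q in Δ ×ˢ Δ, h q.1 * h q.2 * dist q.1 q.2 ^ (-(α * κ)))) :=
  slowly_varying_double_integral_limit_general L hLpos hLmeas hLslow hLloc κ α hακ Δ hbd hmeas h
    hhmeas hhbdd
end
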